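/- arXiv:2505.23125 — 7 statements merged into one kernel-verified Lean document; each statement's English description precedes it below -/
import Mathlib

section
/- Let R_s, L_d, L_q > 0, φ ∈ ℝ, η ∈ [0,1], and let i_d, i_q, i_f, θ, ω, v_d, v_q : ℝ → ℝ be differentiable with θ' = ω and satisfying the faulty PMSM current dynamics. Then the signals i_α := i_d + (2η/3)·cos θ·i_f and i_β := i_q − (2η/3)·sin θ·i_f are differentiable and satisfy the linear time-varying system L_d·i_α' = −R_s·i_α + ω·L_q·i_β + v_d and L_q·i_β' = −ω·L_d·i_α − R_s·i_β − ω·φ + v_q on all of ℝ. -/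
/-!
The fault terms `e_d`, `e_q` are exactly what the product and chain rules produce when the
offset `(2η/3)·i_f·(cos θ, −sin θ)` is differentiated along `θ' = ω`, so passing to
`i_α`, `i_β` absorbs them and leaves the healthy machine equations.
-/

open Real

section

variable {θ f : ℝ → ℝ} {w f' t : ℝ}

theorem hasDerivAt_const_mul_cos_comp_mul (c : ℝ) (hθ : HasDerivAt θ w t)
    (hf : HasDerivAt f f' t) :
    HasDerivAt (fun s => c * cos (θ s) * f s) (c * (-sin (θ t) * w * f t + cos (θ t) * f')) t :=
  (((hasDerivAt_cos (θ t)).comp t hθ).const_mul c |>.mul hf).congr_deriv <| by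
    simp only [Function.comp_apply]; ring

theorem hasDerivAt_const_mul_sin_comp_mul (c : ℝ) (hθ : HasDerivAt θ w t)
    (hf : HasDerivAt f f' t) :
    HasDerivAt (fun s => c * sin (θ s) * f s) (c * (cos (θ t) * w * f t + sin (θ t) * f')) t :=
  (((hasDerivAt_sin (θ t)).comp t hθ).const_mul c |>.mul hf).congr_deriv <| by
    simp only [Function.comp_apply]; ring

end

theorem stmt_0_general
    (Rs Ld Lq φ η : ℝ)
    (iD iQ iF θ ω vd vq : ℝ → ℝ)
    (iD' iQ' iF' : ℝ → ℝ)
    (hθ : ∀ t, HasDerivAt θ (ω t) t)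
    (hiF : ∀ t, HasDerivAt iF (iF' t) t)
    (hiD : ∀ t, HasDerivAt iD (iD' t) t)
    (hiQ : ∀ t, HasDerivAt iQ (iQ' t) t)
    (ed eq : ℝ → ℝ)
    (hed : ∀ t, ed t = (2 * η / 3) *
      ((-Rs * Real.cos (θ t) + ω t * (Ld - Lq) * Real.sin (θ t)) * iF t
        - Ld * Real.cos (θ t) * iF' t))
    (heq : ∀ t, eq t = (2 * η / 3) *
      ((Rs * Real.sin (θ t) - ω t * (Ld - Lq) * Real.cos (θ t)) * iF t
        + Lq * Real.sin (θ t) * iF' t))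
    (hdynD : ∀ t, Ld * iD' t = -Rs * iD t + ω t * Lq * iQ t + vd t + ed t)
    (hdynQ : ∀ t, Lq * iQ' t = -Rs * iQ t - ω t * Ld * iD t - ω t * φ + vq t + eq t) :
    ∃ iα' iβ' : ℝ → ℝ,
      (∀ t, HasDerivAt (fun s => iD s + (2 * η / 3) * Real.cos (θ s) * iF s) (iα' t) t) ∧
      (∀ t, HasDerivAt (fun s => iQ s - (2 * η / 3) * Real.sin (θ s) * iF s) (iβ' t) t) ∧
      (∀ t, Ld * iα' t =
        -Rs * (iD t + (2 * η / 3) * Real.cos (θ t) * iF t)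
          + ω t * Lq * (iQ t - (2 * η / 3) * Real.sin (θ t) * iF t) + vd t) ∧
      (∀ t, Lq * iβ' t =
        -(ω t) * Ld * (iD t + (2 * η / 3) * Real.cos (θ t) * iF t)
          - Rs * (iQ t - (2 * η / 3) * Real.sin (θ t) * iF t) - ω t * φ + vq t) := by
  set k := 2 * η / 3
  refine ⟨fun t => iD' t + k * (-sin (θ t) * ω t * iF t + cos (θ t) * iF' t),
    fun t => iQ' t - k * (cos (θ t) * ω t * iF t + sin (θ t) * iF' t),
    fun t => (hiD t).add (hasDerivAt_const_mul_cos_comp_mul k (hθ t) (hiF t)),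
    fun t => (hiQ t).sub (hasDerivAt_const_mul_sin_comp_mul k (hθ t) (hiF t)),
    fun t => ?_, fun t => ?_⟩
  · linear_combination hdynD t + hed t
  · linear_combination hdynQ t + heq t

/-- the signals `i_α = i_d + (2η/3)·cos θ·i_f` and
`i_β = i_q − (2η/3)·sin θ·i_f` of the faulty PMSM satisfy the LTV system
`L_d·i_α' = −R_s·i_α + ω·L_q·i_β + v_d`, `L_q·i_β' = −ω·L_d·i_α − R_s·i_β − ω·φ + v_q`. -/
theorem stmt_0
    (Rs Ld Lq φ η : ℝ)
    (hRs : 0 < Rs) (hLd : 0 < Ld) (hLq : 0 < Lq)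
    (hη : η ∈ Set.Icc (0:ℝ) 1)
    (iD iQ iF θ ω vd vq : ℝ → ℝ)
    (iD' iQ' iF' : ℝ → ℝ)
    (hθ : ∀ t, HasDerivAt θ (ω t) t)
    (hω : Differentiable ℝ ω) (hvd : Differentiable ℝ vd) (hvq : Differentiable ℝ vq)
    (hiF : ∀ t, HasDerivAt iF (iF' t) t)
    (hiD : ∀ t, HasDerivAt iD (iD' t) t)
    (hiQ : ∀ t, HasDerivAt iQ (iQ' t) t)
    (ed eq : ℝ → ℝ)
    (hed : ∀ t, ed t = (2 * η / 3) *
      ((-Rs * Real.cos (θ t) + ω t * (Ld - Lq) * Real.sin (θ t)) * iF t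
        - Ld * Real.cos (θ t) * iF' t))
    (heq : ∀ t, eq t = (2 * η / 3) *
      ((Rs * Real.sin (θ t) - ω t * (Ld - Lq) * Real.cos (θ t)) * iF t
        + Lq * Real.sin (θ t) * iF' t))
    (hdynD : ∀ t, Ld * iD' t = -Rs * iD t + ω t * Lq * iQ t + vd t + ed t)
    (hdynQ : ∀ t, Lq * iQ' t = -Rs * iQ t - ω t * Ld * iD t - ω t * φ + vq t + eq t) :
    ∃ iα' iβ' : ℝ → ℝ,
      (∀ t, HasDerivAt (fun s => iD s + (2 * η / 3) * Real.cos (θ s) * iF s) (iα' t) t) ∧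
      (∀ t, HasDerivAt (fun s => iQ s - (2 * η / 3) * Real.sin (θ s) * iF s) (iβ' t) t) ∧
      (∀ t, Ld * iα' t =
        -Rs * (iD t + (2 * η / 3) * Real.cos (θ t) * iF t)
          + ω t * Lq * (iQ t - (2 * η / 3) * Real.sin (θ t) * iF t) + vd t) ∧
      (∀ t, Lq * iβ' t =
        -(ω t) * Ld * (iD t + (2 * η / 3) * Real.cos (θ t) * iF t)
          - Rs * (iQ t - (2 * η / 3) * Real.sin (θ t) * iF t) - ω t * φ + vq t) :=
  stmt_0_general Rs Ld Lq φ η iD iQ iF θ ω vd vq iD' iQ' iF' hθ hiF hiD hiQ ed eq hed heq hdynD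
    hdynQ
end

section
/- Let R_s, L_d, L_q > 0 and let ω : ℝ → ℝ be continuous. If ε = (ε₁, ε₂) : ℝ → ℝ² is differentiable and satisfies the error dynamics L_d·ε₁' = −R_s·ε₁ + ω·L_q·ε₂ and L_q·ε₂' = −ω·L_d·ε₁ − R_s·ε₂, then for all t ≥ 0, |ε(t)|² ≤ m·e^{−ρ t}·|ε(0)|², where m := max{L_d/L_q, L_q/L_d} / min{L_d/L_q, L_q/L_d} and ρ := R_s·min{1/L_q, 1/L_d}. -/
/-!
`V = L_d² ε₁² + L_q² ε₂²` is a Lyapunov function: with these weights the `ω`-terms cancel, so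
`V' = −2 R_s (L_d ε₁² + L_q ε₂²) ≤ −ρ V`, and Grönwall gives `V(t) ≤ e^{−ρt} V(0)`. Comparing `V`
with `|ε|²` costs the factor `max(L_d², L_q²) / min(L_d², L_q²)`, which is `m`.
-/

open Real

theorem le_exp_mul_of_hasDerivAt_le_mul {V V' : ℝ → ℝ} {c : ℝ}
    (hV : ∀ s, HasDerivAt V (V' s) s) (hle : ∀ s, V' s ≤ c * V s) {t : ℝ} (ht : 0 ≤ t) :
    V t ≤ V 0 * exp (c * t) := by
  have := le_gronwallBound_of_liminf_deriv_right_le (ε := 0) (a := 0) (b := t)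
    (fun s _ => (hV s).continuousAt.continuousWithinAt)
    (fun s _ _ hr => (hV s).hasDerivWithinAt.liminf_right_slope_le hr) le_rfl
    (fun s _ => by simpa using hle s) t ⟨ht, le_rfl⟩
  rwa [gronwallBound_ε0, sub_zero] at this

theorem max_div_min_div_eq_max_sq_div_min_sq {a b : ℝ} (ha : 0 < a) (hb : 0 < b) :
    max (a / b) (b / a) / min (a / b) (b / a) = max (a ^ 2) (b ^ 2) / min (a ^ 2) (b ^ 2) := by
  wlog hab : a ≤ b generalizing a b
  · simpa only [max_comm, min_comm] using this hb ha (le_of_not_ge hab)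
  have hdiv : a / b ≤ b / a := by rw [div_le_div_iff₀ hb ha]; nlinarith
  have hsq : a ^ 2 ≤ b ^ 2 := by gcongr
  rw [max_eq_right hdiv, min_eq_left hdiv, max_eq_right hsq, min_eq_left hsq]
  field_simp

theorem min_mul_add_le {a b x y : ℝ} (hx : 0 ≤ x) (hy : 0 ≤ y) :
    min a b * (x + y) ≤ a * x + b * y := by
  nlinarith [mul_le_mul_of_nonneg_right (min_le_left a b) hx,
    mul_le_mul_of_nonneg_right (min_le_right a b) hy]

theorem add_mul_le_max_mul {a b x y : ℝ} (hx : 0 ≤ x) (hy : 0 ≤ y) :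
    a * x + b * y ≤ max a b * (x + y) := by
  nlinarith [mul_le_mul_of_nonneg_right (le_max_left a b) hx,
    mul_le_mul_of_nonneg_right (le_max_right a b) hy]

theorem min_one_div_mul_sq_add_le {a b x y : ℝ} (ha : 0 < a) (hb : 0 < b)
    (hx : 0 ≤ x) (hy : 0 ≤ y) :
    min (1 / b) (1 / a) * (a ^ 2 * x + b ^ 2 * y) ≤ a * x + b * y := by
  have hmin_a : min (1 / b) (1 / a) * a ≤ 1 := by
    calc _ ≤ 1 / a * a := by gcongr; exact min_le_right _ _
      _ = 1 := by field_simp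
  have hmin_b : min (1 / b) (1 / a) * b ≤ 1 := by
    calc _ ≤ 1 / b * b := by gcongr; exact min_le_left _ _
      _ = 1 := by field_simp
  nlinarith [mul_le_mul_of_nonneg_right hmin_a (mul_nonneg ha.le hx),
    mul_le_mul_of_nonneg_right hmin_b (mul_nonneg hb.le hy)]

theorem HasDerivAt.weighted_sq_add {f g : ℝ → ℝ} {f' g' a b s : ℝ}
    (hf : HasDerivAt f f' s) (hg : HasDerivAt g g' s) :
    HasDerivAt (fun u => a * f u ^ 2 + b * g u ^ 2) (2 * (a * f s * f' + b * g s * g')) s :=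
  (((hf.fun_pow 2).const_mul a).fun_add ((hg.fun_pow 2).const_mul b)).congr_deriv
    (by push_cast; ring)

theorem stmt_2_general
    (Rs Ld Lq : ℝ) (hRs : 0 < Rs) (hLd : 0 < Ld) (hLq : 0 < Lq)
    (ω : ℝ → ℝ)
    (ε1 ε2 ε1' ε2' : ℝ → ℝ)
    (h1 : ∀ t, HasDerivAt ε1 (ε1' t) t)
    (h2 : ∀ t, HasDerivAt ε2 (ε2' t) t)
    (hd1 : ∀ t, Ld * ε1' t = -Rs * ε1 t + ω t * Lq * ε2 t)
    (hd2 : ∀ t, Lq * ε2' t = -(ω t) * Ld * ε1 t - Rs * ε2 t) :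
    ∀ t ≥ (0:ℝ),
      (ε1 t) ^ 2 + (ε2 t) ^ 2
        ≤ (max (Ld / Lq) (Lq / Ld) / min (Ld / Lq) (Lq / Ld))
          * Real.exp (-(Rs * min (1 / Lq) (1 / Ld)) * t)
          * ((ε1 0) ^ 2 + (ε2 0) ^ 2) := by
  intro t ht
  set ρ := Rs * min (1 / Lq) (1 / Ld)
  set V : ℝ → ℝ := fun s => Ld ^ 2 * ε1 s ^ 2 + Lq ^ 2 * ε2 s ^ 2
  have hV : ∀ s, HasDerivAt V (-2 * Rs * (Ld * ε1 s ^ 2 + Lq * ε2 s ^ 2)) s := fun s => by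
    convert (h1 s).weighted_sq_add (h2 s) using 1
    linear_combination (-2 * Ld * ε1 s) * hd1 s - (2 * Lq * ε2 s) * hd2 s
  have hdecay : ∀ s, -2 * Rs * (Ld * ε1 s ^ 2 + Lq * ε2 s ^ 2) ≤ -ρ * V s := fun s => by
    have hρV := mul_le_mul_of_nonneg_left
      (min_one_div_mul_sq_add_le hLd hLq (sq_nonneg (ε1 s)) (sq_nonneg (ε2 s))) hRs.le
    have hW : 0 ≤ Rs * (Ld * ε1 s ^ 2 + Lq * ε2 s ^ 2) := by positivity
    linarith
  have hlow : min (Ld ^ 2) (Lq ^ 2) * (ε1 t ^ 2 + ε2 t ^ 2) ≤ V t :=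
    min_mul_add_le (sq_nonneg _) (sq_nonneg _)
  have hhigh : V 0 ≤ max (Ld ^ 2) (Lq ^ 2) * (ε1 0 ^ 2 + ε2 0 ^ 2) :=
    add_mul_le_max_mul (sq_nonneg _) (sq_nonneg _)
  rw [max_div_min_div_eq_max_sq_div_min_sq hLd hLq, div_mul_eq_mul_div, div_mul_eq_mul_div,
    le_div_iff₀ (lt_min (by positivity) (by positivity))]
  calc (ε1 t ^ 2 + ε2 t ^ 2) * min (Ld ^ 2) (Lq ^ 2) ≤ V t := by linarith
    _ ≤ V 0 * exp (-ρ * t) := le_exp_mul_of_hasDerivAt_le_mul hV hdecay ht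
    _ ≤ _ := by rw [mul_right_comm]; gcongr

/-- exponential bound on the squared norm of solutions of the error
dynamics `L_d·ε₁' = −R_s·ε₁ + ω·L_q·ε₂`, `L_q·ε₂' = −ω·L_d·ε₁ − R_s·ε₂`:
`|ε(t)|² ≤ m·e^{−ρt}·|ε(0)|²` with `m = max{L_d/L_q, L_q/L_d}/min{L_d/L_q, L_q/L_d}`
and `ρ = R_s·min{1/L_q, 1/L_d}`. -/
theorem stmt_2
    (Rs Ld Lq : ℝ) (hRs : 0 < Rs) (hLd : 0 < Ld) (hLq : 0 < Lq)
    (ω : ℝ → ℝ) (hω : Continuous ω)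
    (ε1 ε2 ε1' ε2' : ℝ → ℝ)
    (h1 : ∀ t, HasDerivAt ε1 (ε1' t) t)
    (h2 : ∀ t, HasDerivAt ε2 (ε2' t) t)
    (hd1 : ∀ t, Ld * ε1' t = -Rs * ε1 t + ω t * Lq * ε2 t)
    (hd2 : ∀ t, Lq * ε2' t = -(ω t) * Ld * ε1 t - Rs * ε2 t) :
    ∀ t ≥ (0:ℝ),
      (ε1 t) ^ 2 + (ε2 t) ^ 2
        ≤ (max (Ld / Lq) (Lq / Ld) / min (Ld / Lq) (Lq / Ld))
          * Real.exp (-(Rs * min (1 / Lq) (1 / Ld)) * t)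
          * ((ε1 0) ^ 2 + (ε2 0) ^ 2) :=
  stmt_2_general Rs Ld Lq hRs hLd hLq ω ε1 ε2 ε1' ε2' h1 h2 hd1 hd2
end

section
/- Let R_s, L_d, L_q > 0, ω : ℝ → ℝ continuous, and let ε = (ε₁, ε₂) : ℝ → ℝ² be differentiable with L_d·ε₁' = −R_s·ε₁ + ω·L_q·ε₂ and L_q·ε₂' = −ω·L_d·ε₁ − R_s·ε₂. Define V(t) := (1/2)·((L_d/L_q)·ε₁(t)² + (L_q/L_d)·ε₂(t)²). Then V is differentiable with V'(t) = −(R_s/L_q)·ε₁(t)² − (R_s/L_d)·ε₂(t)² ≤ −ρ·V(t) for all t, and consequently V(t) ≤ e^{−ρ t}·V(0) for all t ≥ 0, where ρ := R_s·min{1/L_q, 1/L_d}. -/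
/-!
The coupling terms `±ω` in the error dynamics are skew with respect to the weights `L_d/L_q`,
`L_q/L_d`, so they cancel in `V'`, leaving only the resistive dissipation. Since
`ρ·L_d ≤ R_s` and `ρ·L_q ≤ R_s`, this dissipation dominates `ρ·V`, and Grönwall's inequality
gives the exponential decay.
-/

open Real

theorem le_exp_mul_mul_of_hasDerivAt_le {f f' : ℝ → ℝ} {K : ℝ}
    (hf : ∀ t, HasDerivAt f (f' t) t) (bound : ∀ t, f' t ≤ K * f t) {t : ℝ} (ht : 0 ≤ t) :
    f t ≤ exp (K * t) * f 0 := by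
  have h := le_gronwallBound_of_liminf_deriv_right_le (δ := f 0) (ε := 0)
    (Differentiable.continuous fun x => (hf x).differentiableAt).continuousOn
    (fun x _ _ hr => (hf x).hasDerivWithinAt.liminf_right_slope_le hr) le_rfl
    (fun x _ => (add_zero (K * f x)).symm ▸ bound x) t ⟨ht, le_rfl⟩
  rwa [sub_zero, gronwallBound_ε0, mul_comm] at h

theorem hasDerivAt_weighted_energy {Rs Ld Lq : ℝ} (hLd : Ld ≠ 0) (hLq : Lq ≠ 0)
    {ω ε1 ε2 ε1' ε2' : ℝ → ℝ} {t : ℝ}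
    (h1 : HasDerivAt ε1 (ε1' t) t) (h2 : HasDerivAt ε2 (ε2' t) t)
    (hd1 : Ld * ε1' t = -Rs * ε1 t + ω t * Lq * ε2 t)
    (hd2 : Lq * ε2' t = -(ω t) * Ld * ε1 t - Rs * ε2 t) :
    HasDerivAt (fun s => (1 / 2) * ((Ld / Lq) * (ε1 s) ^ 2 + (Lq / Ld) * (ε2 s) ^ 2))
      (-(Rs / Lq) * (ε1 t) ^ 2 - (Rs / Ld) * (ε2 t) ^ 2) t := by
  refine ((((h1.fun_pow 2).const_mul (Ld / Lq)).add ((h2.fun_pow 2).const_mul (Lq / Ld))).const_mul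
    (1 / 2)).congr_deriv ?_
  field_simp
  linear_combination (2 * Ld * ε1 t) * hd1 + (2 * Lq * ε2 t) * hd2

theorem weighted_dissipation_le {Rs Ld Lq : ℝ} (hRs : 0 ≤ Rs) (hLd : 0 < Ld) (hLq : 0 < Lq)
    (x y : ℝ) :
    -(Rs / Lq) * x ^ 2 - (Rs / Ld) * y ^ 2
      ≤ -(Rs * min (1 / Lq) (1 / Ld)) * ((1 / 2) * ((Ld / Lq) * x ^ 2 + (Lq / Ld) * y ^ 2)) := by
  set ρ := Rs * min (1 / Lq) (1 / Ld)
  have hρLq : ρ * Lq ≤ Rs := by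
    have := mul_le_mul_of_nonneg_left (min_le_left (1 / Lq) (1 / Ld)) hRs
    rwa [← le_div_iff₀ hLq, ← mul_one_div]
  have hρLd : ρ * Ld ≤ Rs := by
    have := mul_le_mul_of_nonneg_left (min_le_right (1 / Lq) (1 / Ld)) hRs
    rwa [← le_div_iff₀ hLd, ← mul_one_div]
  have hd : 0 ≤ Rs - ρ * Ld / 2 := by linarith
  have hq : 0 ≤ Rs - ρ * Lq / 2 := by linarith
  have gap : -ρ * ((1 / 2) * ((Ld / Lq) * x ^ 2 + (Lq / Ld) * y ^ 2))
      - (-(Rs / Lq) * x ^ 2 - (Rs / Ld) * y ^ 2)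
      = (Rs - ρ * Ld / 2) / Lq * x ^ 2 + (Rs - ρ * Lq / 2) / Ld * y ^ 2 := by
    field_simp
    ring
  rw [← sub_nonneg, gap]
  positivity

theorem stmt_3_general
    (Rs Ld Lq : ℝ) (hRs : 0 < Rs) (hLd : 0 < Ld) (hLq : 0 < Lq)
    (ω : ℝ → ℝ)
    (ε1 ε2 ε1' ε2' : ℝ → ℝ)
    (h1 : ∀ t, HasDerivAt ε1 (ε1' t) t)
    (h2 : ∀ t, HasDerivAt ε2 (ε2' t) t)
    (hd1 : ∀ t, Ld * ε1' t = -Rs * ε1 t + ω t * Lq * ε2 t)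
    (hd2 : ∀ t, Lq * ε2' t = -(ω t) * Ld * ε1 t - Rs * ε2 t) :
    (∀ t, HasDerivAt (fun s => (1 / 2) * ((Ld / Lq) * (ε1 s) ^ 2 + (Lq / Ld) * (ε2 s) ^ 2))
        (-(Rs / Lq) * (ε1 t) ^ 2 - (Rs / Ld) * (ε2 t) ^ 2) t) ∧
    (∀ t, -(Rs / Lq) * (ε1 t) ^ 2 - (Rs / Ld) * (ε2 t) ^ 2
        ≤ -(Rs * min (1 / Lq) (1 / Ld))
            * ((1 / 2) * ((Ld / Lq) * (ε1 t) ^ 2 + (Lq / Ld) * (ε2 t) ^ 2))) ∧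
    (∀ t ≥ (0:ℝ),
      (1 / 2) * ((Ld / Lq) * (ε1 t) ^ 2 + (Lq / Ld) * (ε2 t) ^ 2)
        ≤ Real.exp (-(Rs * min (1 / Lq) (1 / Ld)) * t)
          * ((1 / 2) * ((Ld / Lq) * (ε1 0) ^ 2 + (Lq / Ld) * (ε2 0) ^ 2))) := by
  have hderiv := fun t => hasDerivAt_weighted_energy hLd.ne' hLq.ne' (h1 t) (h2 t) (hd1 t) (hd2 t)
  have hdiss := fun t => weighted_dissipation_le hRs.le hLd hLq (ε1 t) (ε2 t)
  exact ⟨hderiv, hdiss, fun t ht => le_exp_mul_mul_of_hasDerivAt_le hderiv hdiss ht⟩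

/-- the Lyapunov function `V = (1/2)((L_d/L_q)ε₁² + (L_q/L_d)ε₂²)` is
differentiable along the error dynamics with
`V' = −(R_s/L_q)ε₁² − (R_s/L_d)ε₂² ≤ −ρ·V`, and hence `V(t) ≤ e^{−ρt}·V(0)` for `t ≥ 0`,
where `ρ = R_s·min{1/L_q, 1/L_d}`. -/
theorem stmt_3
    (Rs Ld Lq : ℝ) (hRs : 0 < Rs) (hLd : 0 < Ld) (hLq : 0 < Lq)
    (ω : ℝ → ℝ) (hω : Continuous ω)
    (ε1 ε2 ε1' ε2' : ℝ → ℝ)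
    (h1 : ∀ t, HasDerivAt ε1 (ε1' t) t)
    (h2 : ∀ t, HasDerivAt ε2 (ε2' t) t)
    (hd1 : ∀ t, Ld * ε1' t = -Rs * ε1 t + ω t * Lq * ε2 t)
    (hd2 : ∀ t, Lq * ε2' t = -(ω t) * Ld * ε1 t - Rs * ε2 t) :
    (∀ t, HasDerivAt (fun s => (1 / 2) * ((Ld / Lq) * (ε1 s) ^ 2 + (Lq / Ld) * (ε2 s) ^ 2))
        (-(Rs / Lq) * (ε1 t) ^ 2 - (Rs / Ld) * (ε2 t) ^ 2) t) ∧
    (∀ t, -(Rs / Lq) * (ε1 t) ^ 2 - (Rs / Ld) * (ε2 t) ^ 2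
        ≤ -(Rs * min (1 / Lq) (1 / Ld))
            * ((1 / 2) * ((Ld / Lq) * (ε1 t) ^ 2 + (Lq / Ld) * (ε2 t) ^ 2))) ∧
    (∀ t ≥ (0:ℝ),
      (1 / 2) * ((Ld / Lq) * (ε1 t) ^ 2 + (Lq / Ld) * (ε2 t) ^ 2)
        ≤ Real.exp (-(Rs * min (1 / Lq) (1 / Ld)) * t)
          * ((1 / 2) * ((Ld / Lq) * (ε1 0) ^ 2 + (Lq / Ld) * (ε2 0) ^ 2))) :=
  stmt_3_general Rs Ld Lq hRs hLd hLq ω ε1 ε2 ε1' ε2' h1 h2 hd1 hd2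
end

section
/- Let R_s, L_d, L_q > 0, φ ∈ ℝ, η ∈ [0,1], and let i_d, i_q, i_f, θ, ω, v_d, v_q : ℝ → ℝ be differentiable with θ' = ω, satisfying the faulty PMSM current dynamics, and let î_αβ : ℝ → ℝ² be any differentiable solution of the observer L_d·î_α' = −R_s·î_α + ω·L_q·î_β + v_d, L_q·î_β' = −ω·L_d·î_α − R_s·î_β − ω·φ + v_q. Then for all t ≥ 0, | |î_αβ(t) − i_dq(t)| − (2η/3)·|i_f(t)| | ≤ √m·e^{−(ρ/2)t}·|î_αβ(0) − i_αβ(0)|, where m := max{L_d/L_q, L_q/L_d} / min{L_d/L_q, L_q/L_d} and ρ := R_s·min{1/L_q, 1/L_d}; in particular |î_αβ(t) − i_dq(t)| − (2η/3)·|i_f(t)| → 0 exponentially fast as t → ∞. -/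
/-!
The observer error `e = î_αβ - i_αβ` obeys the fault-free dq dynamics
`L_d e_α' = -R_s e_α + ω L_q e_β`, `L_q e_β' = -ω L_d e_α - R_s e_β`: the fault terms `e_d, e_q`
are exactly what differentiating the rotating fault current `(2η/3) i_f (cos θ, -sin θ)` produces.
For the weighted energy `V = (L_d e_α)² + (L_q e_β)²` the gyration terms cancel, leaving
`V' = -2 R_s (L_d e_α² + L_q e_β²) ≤ -ρ V`, so Grönwall gives `V(t) ≤ V(0) e^{-ρt}`; comparing `V`
with `|e|²` costs the factor `(max(L_d, L_q) / min(L_d, L_q))² = m`. Finally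
`î_αβ - i_dq = e + (i_αβ - i_dq)` with `|i_αβ - i_dq| = (2η/3)|i_f|`, and the reverse triangle
inequality concludes.
-/

open Real Filter Topology

theorem le_mul_exp_of_hasDerivAt_le_neg_mul {V V' : ℝ → ℝ} {ρ : ℝ}
    (hV : ∀ t, HasDerivAt V (V' t) t) (hdecay : ∀ t, V' t ≤ -ρ * V t) {t : ℝ} (ht : 0 ≤ t) :
    V t ≤ V 0 * exp (-ρ * t) := by
  have := le_gronwallBound_of_liminf_deriv_right_le (δ := V 0) (K := -ρ) (ε := 0)
    (fun s _ => (hV s).continuousAt.continuousWithinAt)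
    (fun s _ r hr => (hV s).hasDerivWithinAt.liminf_right_slope_le hr) le_rfl
    (fun s _ => (add_zero (-ρ * V s)).symm ▸ hdecay s) t ⟨ht, le_rfl⟩
  simpa [gronwallBound_ε0] using this

theorem abs_sqrt_sub_sqrt_le_sqrt (a b u v : ℝ) :
    |√(a ^ 2 + b ^ 2) - √(u ^ 2 + v ^ 2)| ≤ √((a - u) ^ 2 + (b - v) ^ 2) := by
  have h := abs_norm_sub_norm_le (⟨a, b⟩ : ℂ) ⟨u, v⟩
  rw [show (⟨a, b⟩ - ⟨u, v⟩ : ℂ) = ⟨a - u, b - v⟩ from rfl] at h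
  simpa [Complex.norm_def, Complex.normSq_mk, sq] using h

theorem abs_sqrt_sq_add_sq_sub_abs_le (a b r θ : ℝ) :
    abs (√(a ^ 2 + b ^ 2) - |r|) ≤ √((a - r * cos θ) ^ 2 + (b + r * sin θ) ^ 2) := by
  have hr : √((r * cos θ) ^ 2 + (r * sin θ) ^ 2) = |r| := by
    rw [← sqrt_sq_eq_abs]
    congr 1
    linear_combination r ^ 2 * sin_sq_add_cos_sq θ
  simpa [hr] using abs_sqrt_sub_sqrt_le_sqrt a b (r * cos θ) (-(r * sin θ))

theorem min_sq_mul_le_mul_sq_add_mul_sq (a b x y : ℝ) (ha : 0 ≤ a) (hb : 0 ≤ b) :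
    min a b ^ 2 * (x ^ 2 + y ^ 2) ≤ (a * x) ^ 2 + (b * y) ^ 2 := by
  have hm : 0 ≤ min a b := le_min ha hb
  have h1 : min a b ^ 2 ≤ a ^ 2 := pow_le_pow_left₀ hm (min_le_left a b) 2
  have h2 : min a b ^ 2 ≤ b ^ 2 := pow_le_pow_left₀ hm (min_le_right a b) 2
  nlinarith [sq_nonneg x, sq_nonneg y]

theorem mul_sq_add_mul_sq_le_max_sq_mul (a b x y : ℝ) (ha : 0 ≤ a) (hb : 0 ≤ b) :
    (a * x) ^ 2 + (b * y) ^ 2 ≤ max a b ^ 2 * (x ^ 2 + y ^ 2) := by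
  have h1 : a ^ 2 ≤ max a b ^ 2 := pow_le_pow_left₀ ha (le_max_left a b) 2
  have h2 : b ^ 2 ≤ max a b ^ 2 := pow_le_pow_left₀ hb (le_max_right a b) 2
  nlinarith [sq_nonneg x, sq_nonneg y]

theorem sqrt_max_div_div_min_div_eq {a b : ℝ} (ha : 0 < a) (hb : 0 < b) :
    √(max (a / b) (b / a) / min (a / b) (b / a)) = max a b / min a b := by
  rcases le_total a b with h | h
  · have h' : a / b ≤ b / a := by rw [div_le_div_iff₀ hb ha]; nlinarith
    rw [max_eq_right h', min_eq_left h', max_eq_right h, min_eq_left h,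
      show b / a / (a / b) = (b / a) ^ 2 by field_simp, sqrt_sq (by positivity)]
  · have h' : b / a ≤ a / b := by rw [div_le_div_iff₀ ha hb]; nlinarith
    rw [max_eq_left h', min_eq_right h', max_eq_left h, min_eq_right h,
      show a / b / (b / a) = (a / b) ^ 2 by field_simp, sqrt_sq (by positivity)]

section DQDynamics

variable {Rs Ld Lq : ℝ} {ω X Y X' Y' : ℝ → ℝ}

theorem dq_energy_le_mul_exp (hRs : 0 ≤ Rs) (hLd : 0 < Ld) (hLq : 0 < Lq)
    (hX : ∀ t, HasDerivAt X (X' t) t) (hY : ∀ t, HasDerivAt Y (Y' t) t)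
    (hXdyn : ∀ t, Ld * X' t = -Rs * X t + ω t * Lq * Y t)
    (hYdyn : ∀ t, Lq * Y' t = -ω t * Ld * X t - Rs * Y t) {t : ℝ} (ht : 0 ≤ t) :
    (Ld * X t) ^ 2 + (Lq * Y t) ^ 2
      ≤ ((Ld * X 0) ^ 2 + (Lq * Y 0) ^ 2) * exp (-(Rs * min (1 / Lq) (1 / Ld)) * t) := by
  set ρ := Rs * min (1 / Lq) (1 / Ld)
  have hρLd : ρ * Ld ≤ Rs := calc
    ρ * Ld ≤ Rs * (1 / Ld) * Ld :=
      mul_le_mul_of_nonneg_right (mul_le_mul_of_nonneg_left (min_le_right _ _) hRs) hLd.le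
    _ = Rs := by field_simp
  have hρLq : ρ * Lq ≤ Rs := calc
    ρ * Lq ≤ Rs * (1 / Lq) * Lq :=
      mul_le_mul_of_nonneg_right (mul_le_mul_of_nonneg_left (min_le_left _ _) hRs) hLq.le
    _ = Rs := by field_simp
  have hV : ∀ s, HasDerivAt (fun s => (Ld * X s) ^ 2 + (Lq * Y s) ^ 2)
      (-2 * Rs * (Ld * X s ^ 2 + Lq * Y s ^ 2)) s := fun s =>
    ((((hX s).const_mul Ld).pow 2).add (((hY s).const_mul Lq).pow 2)).congr_deriv (by
      linear_combination (2 * Ld * X s) * hXdyn s + (2 * Lq * Y s) * hYdyn s)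
  refine le_mul_exp_of_hasDerivAt_le_neg_mul hV (fun s => ?_) ht
  have h1 : 0 ≤ (Rs - ρ * Ld) * (Ld * X s ^ 2) := by
    have := sq_nonneg (X s); have := sub_nonneg.2 hρLd; positivity
  have h2 : 0 ≤ (Rs - ρ * Lq) * (Lq * Y s ^ 2) := by
    have := sq_nonneg (Y s); have := sub_nonneg.2 hρLq; positivity
  nlinarith [mul_nonneg hRs (mul_nonneg hLd.le (sq_nonneg (X s))),
    mul_nonneg hRs (mul_nonneg hLq.le (sq_nonneg (Y s)))]

theorem dq_sqrt_le_mul_exp (hRs : 0 ≤ Rs) (hLd : 0 < Ld) (hLq : 0 < Lq)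
    (hX : ∀ t, HasDerivAt X (X' t) t) (hY : ∀ t, HasDerivAt Y (Y' t) t)
    (hXdyn : ∀ t, Ld * X' t = -Rs * X t + ω t * Lq * Y t)
    (hYdyn : ∀ t, Lq * Y' t = -ω t * Ld * X t - Rs * Y t) {t : ℝ} (ht : 0 ≤ t) :
    √(X t ^ 2 + Y t ^ 2) ≤ max Ld Lq / min Ld Lq
      * exp (-(Rs * min (1 / Lq) (1 / Ld)) / 2 * t) * √(X 0 ^ 2 + Y 0 ^ 2) := by
  set ρ := Rs * min (1 / Lq) (1 / Ld)
  have hmin : 0 < min Ld Lq := lt_min hLd hLq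
  have hexp : exp (-ρ / 2 * t) ^ 2 = exp (-ρ * t) := by rw [← exp_nat_mul]; ring_nf
  have hsq : X t ^ 2 + Y t ^ 2
      ≤ (max Ld Lq / min Ld Lq * exp (-ρ / 2 * t)) ^ 2 * (X 0 ^ 2 + Y 0 ^ 2) := by
    have := (min_sq_mul_le_mul_sq_add_mul_sq Ld Lq (X t) (Y t) hLd.le hLq.le).trans
      ((dq_energy_le_mul_exp hRs hLd hLq hX hY hXdyn hYdyn ht).trans
        (mul_le_mul_of_nonneg_right
          (mul_sq_add_mul_sq_le_max_sq_mul Ld Lq (X 0) (Y 0) hLd.le hLq.le) (exp_nonneg _)))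
    rw [mul_pow, hexp, div_pow, div_mul_eq_mul_div, div_mul_eq_mul_div,
      le_div_iff₀ (by positivity)]
    linarith
  calc √(X t ^ 2 + Y t ^ 2)
      ≤ √((max Ld Lq / min Ld Lq * exp (-ρ / 2 * t)) ^ 2 * (X 0 ^ 2 + Y 0 ^ 2)) :=
        sqrt_le_sqrt hsq
    _ = _ := by rw [sqrt_mul (sq_nonneg _), sqrt_sq (by positivity)]

end DQDynamics

theorem stmt_4_general
    (Rs Ld Lq φ η : ℝ)
    (hRs : 0 < Rs) (hLd : 0 < Ld) (hLq : 0 < Lq)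
    (hη : η ∈ Set.Icc (0:ℝ) 1)
    (iD iQ iF θ ω vd vq : ℝ → ℝ)
    (iD' iQ' iF' : ℝ → ℝ)
    (hθ : ∀ t, HasDerivAt θ (ω t) t)
    (hiF : ∀ t, HasDerivAt iF (iF' t) t)
    (hiD : ∀ t, HasDerivAt iD (iD' t) t)
    (hiQ : ∀ t, HasDerivAt iQ (iQ' t) t)
    (ed eq : ℝ → ℝ)
    (hed : ∀ t, ed t = (2 * η / 3) *
      ((-Rs * Real.cos (θ t) + ω t * (Ld - Lq) * Real.sin (θ t)) * iF t
        - Ld * Real.cos (θ t) * iF' t))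
    (heq : ∀ t, eq t = (2 * η / 3) *
      ((Rs * Real.sin (θ t) - ω t * (Ld - Lq) * Real.cos (θ t)) * iF t
        + Lq * Real.sin (θ t) * iF' t))
    (hdynD : ∀ t, Ld * iD' t = -Rs * iD t + ω t * Lq * iQ t + vd t + ed t)
    (hdynQ : ∀ t, Lq * iQ' t = -Rs * iQ t - ω t * Ld * iD t - ω t * φ + vq t + eq t)
    -- the observer `î_αβ = (oα, oβ)`
    (oα oβ oα' oβ' : ℝ → ℝ)
    (hoα : ∀ t, HasDerivAt oα (oα' t) t)
    (hoβ : ∀ t, HasDerivAt oβ (oβ' t) t)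
    (hobsD : ∀ t, Ld * oα' t = -Rs * oα t + ω t * Lq * oβ t + vd t)
    (hobsQ : ∀ t, Lq * oβ' t = -(ω t) * Ld * oα t - Rs * oβ t - ω t * φ + vq t) :
    (∀ t ≥ (0:ℝ),
      abs (Real.sqrt ((oα t - iD t) ^ 2 + (oβ t - iQ t) ^ 2) - (2 * η / 3) * |iF t|)
        ≤ Real.sqrt (max (Ld / Lq) (Lq / Ld) / min (Ld / Lq) (Lq / Ld))
          * Real.exp (-(Rs * min (1 / Lq) (1 / Ld)) / 2 * t)
          * Real.sqrt ((oα 0 - (iD 0 + (2 * η / 3) * Real.cos (θ 0) * iF 0)) ^ 2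
              + (oβ 0 - (iQ 0 - (2 * η / 3) * Real.sin (θ 0) * iF 0)) ^ 2)) ∧
    Filter.Tendsto
      (fun t => Real.sqrt ((oα t - iD t) ^ 2 + (oβ t - iQ t) ^ 2) - (2 * η / 3) * |iF t|)
      Filter.atTop (nhds 0) := by
  have hc : 0 ≤ 2 * η / 3 := by linarith [hη.1]
  set c := 2 * η / 3
  -- the observer error `î_αβ - i_αβ`
  set X := fun t => oα t - iD t - c * iF t * cos (θ t)
  set Y := fun t => oβ t - iQ t + c * iF t * sin (θ t)
  have hX : ∀ t, HasDerivAt X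
      (oα' t - iD' t - (c * iF' t * cos (θ t) + c * iF t * (-sin (θ t) * ω t))) t := fun t =>
    ((hoα t).sub (hiD t)).sub (((hiF t).const_mul c).mul ((hasDerivAt_cos _).comp t (hθ t)))
  have hY : ∀ t, HasDerivAt Y
      (oβ' t - iQ' t + (c * iF' t * sin (θ t) + c * iF t * (cos (θ t) * ω t))) t := fun t =>
    ((hoβ t).sub (hiQ t)).add (((hiF t).const_mul c).mul ((hasDerivAt_sin _).comp t (hθ t)))
  have hbound : ∀ t ≥ 0, abs (√((oα t - iD t) ^ 2 + (oβ t - iQ t) ^ 2) - c * |iF t|)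
      ≤ max Ld Lq / min Ld Lq * exp (-(Rs * min (1 / Lq) (1 / Ld)) / 2 * t)
        * √(X 0 ^ 2 + Y 0 ^ 2) := fun t ht => by
    rw [← abs_of_nonneg hc, ← abs_mul]
    refine (abs_sqrt_sq_add_sq_sub_abs_le _ _ (c * iF t) (θ t)).trans
      (dq_sqrt_le_mul_exp (ω := ω) hRs.le hLd hLq hX hY (fun s => ?_) (fun s => ?_) ht)
    · linear_combination hobsD s - hdynD s - hed s
    · linear_combination hobsQ s - hdynQ s - heq s
  refine ⟨fun t ht => ?_, ?_⟩
  · rw [sqrt_max_div_div_min_div_eq hLd hLq]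
    convert hbound t ht using 3
    ring
  · have hρ : 0 < Rs * min (1 / Lq) (1 / Ld) := by positivity
    have hexp : Tendsto (fun t => exp (-(Rs * min (1 / Lq) (1 / Ld)) / 2 * t)) atTop (𝓝 0) :=
      tendsto_exp_atBot.comp (tendsto_id.const_mul_atTop_of_neg (by linarith))
    have hlim := (hexp.const_mul (max Ld Lq / min Ld Lq)).mul_const √(X 0 ^ 2 + Y 0 ^ 2)
    rw [mul_zero, zero_mul] at hlim
    refine squeeze_zero_norm' ?_ hlim
    filter_upwards [eventually_ge_atTop 0] with t ht using hbound t ht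

/-- for any solution `î_αβ` of the observer, the estimated fault-current
norm `|î_αβ(t) − i_dq(t)|` converges to the actual one `(2η/3)|i_f(t)|`:
`| |î_αβ(t) − i_dq(t)| − (2η/3)|i_f(t)| | ≤ √m·e^{−(ρ/2)t}·|î_αβ(0) − i_αβ(0)|` for `t ≥ 0`,
and the difference tends to `0` exponentially fast. -/
theorem stmt_4
    (Rs Ld Lq φ η : ℝ)
    (hRs : 0 < Rs) (hLd : 0 < Ld) (hLq : 0 < Lq)
    (hη : η ∈ Set.Icc (0:ℝ) 1)
    (iD iQ iF θ ω vd vq : ℝ → ℝ)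
    (iD' iQ' iF' : ℝ → ℝ)
    (hθ : ∀ t, HasDerivAt θ (ω t) t)
    (hω : Differentiable ℝ ω) (hvd : Differentiable ℝ vd) (hvq : Differentiable ℝ vq)
    (hiF : ∀ t, HasDerivAt iF (iF' t) t)
    (hiD : ∀ t, HasDerivAt iD (iD' t) t)
    (hiQ : ∀ t, HasDerivAt iQ (iQ' t) t)
    (ed eq : ℝ → ℝ)
    (hed : ∀ t, ed t = (2 * η / 3) *
      ((-Rs * Real.cos (θ t) + ω t * (Ld - Lq) * Real.sin (θ t)) * iF t
        - Ld * Real.cos (θ t) * iF' t))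
    (heq : ∀ t, eq t = (2 * η / 3) *
      ((Rs * Real.sin (θ t) - ω t * (Ld - Lq) * Real.cos (θ t)) * iF t
        + Lq * Real.sin (θ t) * iF' t))
    (hdynD : ∀ t, Ld * iD' t = -Rs * iD t + ω t * Lq * iQ t + vd t + ed t)
    (hdynQ : ∀ t, Lq * iQ' t = -Rs * iQ t - ω t * Ld * iD t - ω t * φ + vq t + eq t)
    -- the observer `î_αβ = (oα, oβ)`
    (oα oβ oα' oβ' : ℝ → ℝ)
    (hoα : ∀ t, HasDerivAt oα (oα' t) t)
    (hoβ : ∀ t, HasDerivAt oβ (oβ' t) t)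
    (hobsD : ∀ t, Ld * oα' t = -Rs * oα t + ω t * Lq * oβ t + vd t)
    (hobsQ : ∀ t, Lq * oβ' t = -(ω t) * Ld * oα t - Rs * oβ t - ω t * φ + vq t) :
    (∀ t ≥ (0:ℝ),
      abs (Real.sqrt ((oα t - iD t) ^ 2 + (oβ t - iQ t) ^ 2) - (2 * η / 3) * |iF t|)
        ≤ Real.sqrt (max (Ld / Lq) (Lq / Ld) / min (Ld / Lq) (Lq / Ld))
          * Real.exp (-(Rs * min (1 / Lq) (1 / Ld)) / 2 * t)
          * Real.sqrt ((oα 0 - (iD 0 + (2 * η / 3) * Real.cos (θ 0) * iF 0)) ^ 2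
              + (oβ 0 - (iQ 0 - (2 * η / 3) * Real.sin (θ 0) * iF 0)) ^ 2)) ∧
    Filter.Tendsto
      (fun t => Real.sqrt ((oα t - iD t) ^ 2 + (oβ t - iQ t) ^ 2) - (2 * η / 3) * |iF t|)
      Filter.atTop (nhds 0) :=
  stmt_4_general Rs Ld Lq φ η hRs hLd hLq hη iD iQ iF θ ω vd vq iD' iQ' iF' hθ hiF hiD hiQ ed eq hed
    heq hdynD hdynQ oα oβ oα' oβ' hoα hoβ hobsD hobsQ
end

section
/- Let n ≥ 1, let Ψ : ℝ → ℝⁿ be continuous, Θ ∈ ℝⁿ a constant vector, y(t) := Ψ(t)ᵀΘ, γ > 0, G ∈ ℝ^{n×n}, F₀ ∈ ℝ^{n×n} invertible, and χ : ℝ → ℝ continuous. Suppose Θ̂ : ℝ → ℝⁿ, F : ℝ → ℝ^{n×n}, z : ℝ → ℝ are differentiable and satisfy Θ̂' = γ·F·G·Ψ·(y − ΨᵀΘ̂), F' = −γ·F·G·Ψ·Ψᵀ·F + χ·F with F(0) = F₀, and z' = −χ·z with z(0) = 1. Then for all t ≥ 0, Θ̂(t) − Θ = z(t)·F(t)·F₀⁻¹·(Θ̂(0)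 − Θ). -/
/-!
The estimation error `e = Θ̂ - Θ` solves the linear ODE `e' = A e` with
`A = -γ (F G Ψ) Ψᵀ`, since `y - Ψᵀ Θ̂ = -Ψᵀ e`. The candidate `t ↦ z(t) F(t) F₀⁻¹ e(0)` solves
the same ODE: differentiating `z F` produces the forgetting terms `-χ z F` and `χ z F`, which
cancel, and `F G Ψ Ψᵀ F = (F G Ψ) (Ψᵀ F)`. Both agree at `t = 0`, and the coefficient `A` is
continuous, hence bounded on `[0, t]`, so Grönwall's inequality forces the two solutions to agree.
-/

open Matrix Set

theorem eqOn_Icc_of_hasDerivAt_clm_apply {E : Type*} [NormedAddCommGroup E] [NormedSpace ℝ E]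
    {A : ℝ → E →L[ℝ] E} {f g : ℝ → E} {a b : ℝ} (hA : ContinuousOn A (Icc a b))
    (hf : ∀ t ∈ Icc a b, HasDerivAt f (A t (f t)) t)
    (hg : ∀ t ∈ Icc a b, HasDerivAt g (A t (g t)) t) (ha : f a = g a) :
    EqOn f g (Icc a b) := by
  obtain ⟨C, hC⟩ := isCompact_Icc.exists_bound_of_continuousOn hA
  have hdiff : ∀ t ∈ Icc a b, HasDerivAt (f - g) (A t ((f - g) t)) t := fun t ht => by
    simpa only [Pi.sub_apply, map_sub] using (hf t ht).sub (hg t ht)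
  have hzero := eq_zero_of_abs_deriv_le_mul_abs_self_of_eq_zero_right (K := C)
    (fun t ht => (hdiff t ht).continuousAt.continuousWithinAt)
    (fun t ht => (hdiff t (Ico_subset_Icc_self ht)).hasDerivWithinAt) (sub_eq_zero.2 ha)
    (fun t ht => (A t).le_of_opNorm_le (hC t (Ico_subset_Icc_self ht)) _)
  exact fun t ht => sub_eq_zero.1 (hzero t ht)

namespace Matrix

variable {ι κ : Type*} [Fintype ι]

theorem eqOn_Icc_of_hasDerivAt_mulVec {A : ℝ → Matrix ι ι ℝ} {f g : ℝ → ι → ℝ}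
    {a b : ℝ} (hA : ContinuousOn A (Icc a b))
    (hf : ∀ t ∈ Icc a b, HasDerivAt f (A t *ᵥ f t) t)
    (hg : ∀ t ∈ Icc a b, HasDerivAt g (A t *ᵥ g t) t) (ha : f a = g a) :
    EqOn f g (Icc a b) := by
  classical
  let toCLM : Matrix ι ι ℝ →ₗ[ℝ] (ι → ℝ) →L[ℝ] ι → ℝ :=
    LinearMap.toContinuousLinearMap.toLinearMap ∘ₗ Matrix.toLin'.toLinearMap
  exact eqOn_Icc_of_hasDerivAt_clm_apply (A := fun t => toCLM (A t))
    (toCLM.continuous_of_finiteDimensional.comp_continuousOn hA) hf hg ha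

theorem hasDerivAt_smul_mulVec [Fintype κ] {z : ℝ → ℝ} {F : ℝ → Matrix ι κ ℝ} {z' t : ℝ}
    {F' : Matrix ι κ ℝ} (hz : HasDerivAt z z' t)
    (hF : ∀ i j, HasDerivAt (fun s => F s i j) (F' i j) t) (w : κ → ℝ) :
    HasDerivAt (fun s => z s • (F s *ᵥ w)) (z t • (F' *ᵥ w) + z' • (F t *ᵥ w)) t := by
  have hFw : HasDerivAt (fun s => F s *ᵥ w) (F' *ᵥ w) t := hasDerivAt_pi.2 fun i => by
    simpa only [mulVec, dotProduct] using HasDerivAt.fun_sum fun j _ => (hF i j).mul_const (w j)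
  exact hz.smul hFw

theorem smul_riccati_mulVec_add (F G : Matrix ι ι ℝ) (ψ w : ι → ℝ) (γ χ z : ℝ) :
    z • ((-γ • (F * G * vecMulVec ψ ψ * F) + χ • F) *ᵥ w) + (-χ * z) • (F *ᵥ w) =
      (-γ • vecMulVec ((F * G) *ᵥ ψ) ψ) *ᵥ (z • (F *ᵥ w)) := by
  rw [mul_vecMulVec, add_mulVec, smul_mulVec, smul_mulVec, smul_mulVec, ← mulVec_mulVec,
    mulVec_smul]
  module

end Matrix

theorem stmt_6_general
    (n : ℕ)
    (Θ : Fin n → ℝ) (Ψ : ℝ → Fin n → ℝ) (hΨ : Continuous Ψ)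
    (y : ℝ → ℝ) (hy : ∀ t, y t = Ψ t ⬝ᵥ Θ)
    (γ : ℝ)
    (G F₀ : Matrix (Fin n) (Fin n) ℝ) (hF₀ : IsUnit F₀.det)
    (χ : ℝ → ℝ)
    (Θhat : ℝ → Fin n → ℝ) (F : ℝ → Matrix (Fin n) (Fin n) ℝ) (z : ℝ → ℝ)
    (hΘhat : ∀ t i, HasDerivAt (fun s => Θhat s i)
      (((γ * (y t - Ψ t ⬝ᵥ Θhat t)) • ((F t * G) *ᵥ Ψ t)) i) t)
    (hF : ∀ t i j, HasDerivAt (fun s => F s i j)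
      (((-γ) • (F t * G * vecMulVec (Ψ t) (Ψ t) * F t) + χ t • F t) i j) t)
    (hF0 : F 0 = F₀)
    (hz : ∀ t, HasDerivAt z (-(χ t) * z t) t) (hz0 : z 0 = 1) :
    ∀ t ≥ (0:ℝ), Θhat t - Θ = z t • ((F t * F₀⁻¹) *ᵥ (Θhat 0 - Θ)) := by
  intro T hT
  set A : ℝ → Matrix (Fin n) (Fin n) ℝ := fun t => -γ • vecMulVec ((F t * G) *ᵥ Ψ t) (Ψ t)
  set w := F₀⁻¹ *ᵥ (Θhat 0 - Θ)
  have hFc : Continuous F := continuous_pi fun i => continuous_pi fun j =>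
    continuous_iff_continuousAt.2 fun t => (hF t i j).continuousAt
  have hA : Continuous A :=
    (((hFc.matrix_mul continuous_const).matrix_mulVec hΨ).matrix_vecMulVec hΨ).const_smul (-γ)
  have herr : ∀ t, HasDerivAt (fun s => Θhat s - Θ) (A t *ᵥ (Θhat t - Θ)) t := fun t => by
    have hval : (γ * (y t - Ψ t ⬝ᵥ Θhat t)) • ((F t * G) *ᵥ Ψ t) = A t *ᵥ (Θhat t - Θ) := by
      rw [hy, smul_mulVec, vecMulVec_mulVec, op_smul_eq_smul, dotProduct_sub]
      module
    exact hval ▸ hasDerivAt_pi.2 fun i => (hΘhat t i).sub_const (Θ i)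
  have hsol : ∀ t, HasDerivAt (fun s => z s • (F s *ᵥ w)) (A t *ᵥ (z t • (F t *ᵥ w))) t :=
    fun t => smul_riccati_mulVec_add (F t) G (Ψ t) w γ (χ t) (z t) ▸
      hasDerivAt_smul_mulVec (hz t) (hF t) w
  have h0 : Θhat 0 - Θ = z 0 • (F 0 *ᵥ w) := by
    rw [hz0, hF0, one_smul, mulVec_mulVec, mul_nonsing_inv _ hF₀, one_mulVec]
  rw [← mulVec_mulVec]
  exact eqOn_Icc_of_hasDerivAt_mulVec hA.continuousOn (fun t _ => herr t) (fun t _ => hsol t) h0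
    (right_mem_Icc.2 hT)

/-- fundamental error identity of the least-squares estimator with
forgetting factor: `Θ̂(t) − Θ = z(t)·F(t)·F₀⁻¹·(Θ̂(0) − Θ)` for all `t ≥ 0`. -/
theorem stmt_6
    (n : ℕ) (hn : 1 ≤ n)
    (Θ : Fin n → ℝ) (Ψ : ℝ → Fin n → ℝ) (hΨ : Continuous Ψ)
    (y : ℝ → ℝ) (hy : ∀ t, y t = Ψ t ⬝ᵥ Θ)
    (γ : ℝ) (hγ : 0 < γ)
    (G F₀ : Matrix (Fin n) (Fin n) ℝ) (hF₀ : IsUnit F₀.det)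
    (χ : ℝ → ℝ) (hχ : Continuous χ)
    (Θhat : ℝ → Fin n → ℝ) (F : ℝ → Matrix (Fin n) (Fin n) ℝ) (z : ℝ → ℝ)
    (hΘhat : ∀ t i, HasDerivAt (fun s => Θhat s i)
      (((γ * (y t - Ψ t ⬝ᵥ Θhat t)) • ((F t * G) *ᵥ Ψ t)) i) t)
    (hF : ∀ t i j, HasDerivAt (fun s => F s i j)
      (((-γ) • (F t * G * vecMulVec (Ψ t) (Ψ t) * F t) + χ t • F t) i j) t)
    (hF0 : F 0 = F₀)
    (hz : ∀ t, HasDerivAt z (-(χ t) * z t) t) (hz0 : z 0 = 1) :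
    ∀ t ≥ (0:ℝ), Θhat t - Θ = z t • ((F t * F₀⁻¹) *ᵥ (Θhat 0 - Θ)) :=
  stmt_6_general n Θ Ψ hΨ y hy γ G F₀ hF₀ χ Θhat F z hΘhat hF hF0 hz hz0
end

section
/- Swapping lemma in ODE form: Let λ > 0 and let w, v : ℝ → ℝ be continuous with v differentiable with continuous derivative. Let x, y, q : ℝ → ℝ be the solutions of x' = −λ·x + λ·w·v, y' = −λ·y + λ·w, and q' = −λ·q + y·v', all with zero initial conditions at t = 0. Then x(t) = y(t)·v(t) − q(t) for all t ≥ 0; that is, 𝓕[w·v] = 𝓕[w]·v − 𝓕[(1/λ)·𝓕[w]·v̇] where 𝓕(p) = λ/(p+λ). -/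
/-! The defect `z = y·v − q − x` satisfies the homogeneous equation `z' = −λ·z` (the terms
`λ·w·v` cancel and the product rule for `y·v` produces exactly the forcing `y·v'` of `q`),
and `z 0 = 0`; so `z·exp(λt)` has zero derivative and `z` vanishes identically. -/

theorem eq_zero_of_hasDerivAt_const_mul {c : ℝ} {z : ℝ → ℝ}
    (hz : ∀ t, HasDerivAt z (c * z t) t) (hz0 : z 0 = 0) (t : ℝ) : z t = 0 := by
  have hderiv : ∀ s, HasDerivAt (fun s => z s * Real.exp (-c * s)) 0 s := fun s => by
    have hexp : HasDerivAt (fun s => Real.exp (-c * s)) (Real.exp (-c * s) * -c) s := by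
      simpa using ((hasDerivAt_id s).const_mul (-c)).exp
    exact ((hz s).mul hexp).congr_deriv (by ring)
  have hconst := is_const_of_deriv_eq_zero (fun s => (hderiv s).differentiableAt)
    (fun s => (hderiv s).deriv) t 0
  simpa [hz0, Real.exp_ne_zero] using hconst

theorem stmt_15_general
    (lam : ℝ)
    (w v v' : ℝ → ℝ)
    (hv : ∀ t, HasDerivAt v (v' t) t)
    (x y q : ℝ → ℝ)
    (hx : ∀ t, HasDerivAt x (-lam * x t + lam * (w t * v t)) t) (hx0 : x 0 = 0)
    (hy : ∀ t, HasDerivAt y (-lam * y t + lam * w t) t) (hy0 : y 0 = 0)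
    (hq : ∀ t, HasDerivAt q (-lam * q t + y t * v' t) t) (hq0 : q 0 = 0) :
    ∀ t ≥ (0:ℝ), x t = y t * v t - q t := by
  have hdefect : ∀ t, HasDerivAt (fun t => y t * v t - q t - x t)
      (-lam * (y t * v t - q t - x t)) t := fun t =>
    (((hy t).mul (hv t)).sub (hq t)).sub (hx t) |>.congr_deriv (by ring)
  intro t _
  have := eq_zero_of_hasDerivAt_const_mul hdefect (by simp [hx0, hy0, hq0]) t
  linarith

/-- swapping lemma in ODE form. If `x' = −λx + λwv`, `y' = −λy + λw`
and `q' = −λq + y·v'`, all with zero initial conditions at `t = 0`, then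
`x(t) = y(t)·v(t) − q(t)` for all `t ≥ 0`; i.e. `𝓕[wv] = 𝓕[w]·v − 𝓕[(1/λ)𝓕[w]·v̇]`. -/
theorem stmt_15
    (lam : ℝ) (hlam : 0 < lam)
    (w v v' : ℝ → ℝ)
    (hw : Continuous w)
    (hv : ∀ t, HasDerivAt v (v' t) t) (hv' : Continuous v')
    (x y q : ℝ → ℝ)
    (hx : ∀ t, HasDerivAt x (-lam * x t + lam * (w t * v t)) t) (hx0 : x 0 = 0)
    (hy : ∀ t, HasDerivAt y (-lam * y t + lam * w t) t) (hy0 : y 0 = 0)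
    (hq : ∀ t, HasDerivAt q (-lam * q t + y t * v' t) t) (hq0 : q 0 = 0) :
    ∀ t ≥ (0:ℝ), x t = y t * v t - q t :=
  stmt_15_general lam w v v' hv x y q hx hx0 hy hy0 hq hq0
end

section
/- DREM scalarization identity: Let n ≥ 1, let ξ : ℝ → ℝⁿ be continuous, 𝒢* ∈ ℝⁿ a constant vector, y(t) := ξ(t)ᵀ𝒢*, γ > 0, f₀ > 0, and χ : ℝ → ℝ continuous. Suppose Ĝ : ℝ → ℝⁿ, F : ℝ → ℝ^{n×n}, z : ℝ → ℝ are differentiable and satisfy Ĝ' = γ·F·ξ·(y − ξᵀĜ), F' = −γ·F·ξ·ξᵀ·F + χ·F with F(0) = (1/f₀)·Iₙ, and z' = −χ·z with z(0) = 1. Define Δ(t) := det(Iₙ − z(t)·f₀·F(t)) and Y(t) := adj(Iₙ − z(t)·f₀·F(t))·(Ĝ(t) − z(t)·f₀·F(t)·Ĝ(0)), where adj denotes the adjugate matrix. Then Y(t) = Δ(t)·𝒢* for all t ≥ 0. -/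
/-!
The parameter error `Ĝ(t) - 𝒢` and `w(t) = z(t) f₀ F(t) (Ĝ(0) - 𝒢)` solve the same linear ODE
`x' = -γ F ξ ξᵀ x`: for `w` the factor `z` exactly cancels the forgetting term `χ F` in `F'`.
They agree at `t = 0` because `F(0) = f₀⁻¹ I`, so they coincide by uniqueness for linear ODEs,
i.e. `Ĝ(t) - z f₀ F(t) Ĝ(0) = (I - z f₀ F(t)) 𝒢`. Multiplying by the adjugate gives the claim.
-/

open Matrix Set

section LinearODE

variable {E : Type*} [NormedAddCommGroup E] [NormedSpace ℝ E]
  {A : ℝ → E →L[ℝ] E} {f g : ℝ → E} {a b : ℝ}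

theorem linearODE_solution_unique_of_mem_Icc_right (hA : ContinuousOn A (Icc a b))
    (hf : ContinuousOn f (Icc a b))
    (hf' : ∀ t ∈ Ico a b, HasDerivWithinAt f (A t (f t)) (Ici t) t)
    (hg : ContinuousOn g (Icc a b))
    (hg' : ∀ t ∈ Ico a b, HasDerivWithinAt g (A t (g t)) (Ici t) t)
    (ha : f a = g a) :
    EqOn f g (Icc a b) := by
  obtain ⟨C, hC⟩ := isCompact_Icc.exists_bound_of_continuousOn hA
  have hLip : ∀ t ∈ Ico a b, LipschitzOnWith C.toNNReal (A t) univ := fun t ht =>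
    ((A t).lipschitz.weaken
      (NNReal.le_toNNReal_of_coe_le (hC t (Ico_subset_Icc_self ht)))).lipschitzOnWith
  exact ODE_solution_unique_of_mem_Icc_right hLip hf hf' (fun _ _ => mem_univ _) hg hg'
    (fun _ _ => mem_univ _) ha

end LinearODE

theorem Matrix.linearODE_solution_unique_of_mem_Icc_right {m : Type*} [Fintype m]
    [DecidableEq m] {M : ℝ → Matrix m m ℝ} {f g : ℝ → m → ℝ} {a b : ℝ}
    (hM : ContinuousOn M (Icc a b))
    (hf : ContinuousOn f (Icc a b))
    (hf' : ∀ t ∈ Ico a b, HasDerivWithinAt f (M t *ᵥ f t) (Ici t) t)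
    (hg : ContinuousOn g (Icc a b))
    (hg' : ∀ t ∈ Ico a b, HasDerivWithinAt g (M t *ᵥ g t) (Ici t) t)
    (ha : f a = g a) :
    EqOn f g (Icc a b) := by
  let toCLM : Matrix m m ℝ →ₗ[ℝ] (m → ℝ) →L[ℝ] m → ℝ :=
    LinearMap.toContinuousLinearMap.toLinearMap ∘ₗ Matrix.toLin'.toLinearMap
  exact _root_.linearODE_solution_unique_of_mem_Icc_right (A := fun t => toCLM (M t))
    (toCLM.continuous_of_finiteDimensional.comp_continuousOn hM) hf hf' hg hg' ha

theorem hasDerivAt_mulVec_of_entries {m n : Type*} [Fintype n] {F : ℝ → Matrix m n ℝ}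
    {F' : Matrix m n ℝ} {t : ℝ} (hF : ∀ i j, HasDerivAt (fun s => F s i j) (F' i j) t)
    (c : n → ℝ) : HasDerivAt (fun s => F s *ᵥ c) (F' *ᵥ c) t :=
  hasDerivAt_pi.2 fun i => HasDerivAt.fun_sum fun j _ => (hF i j).mul_const (c j)

theorem hasDerivAt_smul_mulVec_of_forgetting_factor {m n : Type*} [Fintype m] [Fintype n]
    {F : ℝ → Matrix m n ℝ} {M : Matrix m m ℝ} {z : ℝ → ℝ} {χ t : ℝ}
    (hF : ∀ i j, HasDerivAt (fun s => F s i j) ((M * F t + χ • F t) i j) t)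
    (hz : HasDerivAt z (-χ * z t) t) (c : n → ℝ) :
    HasDerivAt (fun s => z s • (F s *ᵥ c)) (M *ᵥ (z t • (F t *ᵥ c))) t := by
  refine (hz.smul (hasDerivAt_mulVec_of_entries hF c)).congr_deriv ?_
  rw [add_mulVec, smul_mulVec, ← mulVec_mulVec, mulVec_smul]
  module

theorem stmt_18_general
    (n : ℕ)
    (𝒢 : Fin n → ℝ) (ξ : ℝ → Fin n → ℝ) (hξ : Continuous ξ)
    (y : ℝ → ℝ) (hy : ∀ t, y t = ξ t ⬝ᵥ 𝒢)
    (γ f₀ : ℝ) (hf₀ : 0 < f₀)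
    (χ : ℝ → ℝ)
    (Ghat : ℝ → Fin n → ℝ) (F : ℝ → Matrix (Fin n) (Fin n) ℝ) (z : ℝ → ℝ)
    (hGhat : ∀ t i, HasDerivAt (fun s => Ghat s i)
      (((γ * (y t - ξ t ⬝ᵥ Ghat t)) • (F t *ᵥ ξ t)) i) t)
    (hF : ∀ t i j, HasDerivAt (fun s => F s i j)
      (((-γ) • (F t * vecMulVec (ξ t) (ξ t) * F t) + χ t • F t) i j) t)
    (hF0 : F 0 = (1 / f₀) • (1 : Matrix (Fin n) (Fin n) ℝ))
    (hz : ∀ t, HasDerivAt z (-(χ t) * z t) t) (hz0 : z 0 = 1) :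
    ∀ t ≥ (0:ℝ),
      ((1 : Matrix (Fin n) (Fin n) ℝ) - (z t * f₀) • F t).adjugate
          *ᵥ (Ghat t - (z t * f₀) • (F t *ᵥ Ghat 0))
        = ((1 : Matrix (Fin n) (Fin n) ℝ) - (z t * f₀) • F t).det • 𝒢 := by
  intro t ht
  set M : ℝ → Matrix (Fin n) (Fin n) ℝ := fun s => (-γ) • (F s * vecMulVec (ξ s) (ξ s))
  have hFc : Continuous F := continuous_pi fun i => continuous_pi fun j =>
    continuous_iff_continuousAt.2 fun s => (hF s i j).continuousAt
  have hM : Continuous M := continuous_const.fun_smul (hFc.matrix_mul (hξ.matrix_vecMulVec hξ))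
  have hError : ∀ s, HasDerivAt (fun s => Ghat s - 𝒢) (M s *ᵥ (Ghat s - 𝒢)) s := fun s => by
    refine ((hasDerivAt_pi.2 (hGhat s)).sub_const 𝒢).congr_deriv ?_
    rw [hy, ← dotProduct_sub, smul_mulVec, ← mulVec_mulVec, vecMulVec_mulVec, op_smul_eq_smul,
      mulVec_smul, smul_smul, ← neg_sub, dotProduct_neg]
    ring_nf
  have hScaled : ∀ s, HasDerivAt (fun s => (z s * f₀) • (F s *ᵥ (Ghat 0 - 𝒢)))
      (M s *ᵥ ((z s * f₀) • (F s *ᵥ (Ghat 0 - 𝒢)))) s := fun s => by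
    refine hasDerivAt_smul_mulVec_of_forgetting_factor (χ := χ s) (fun i j => ?_)
      (((hz s).mul_const f₀).congr_deriv (by ring)) _
    simpa only [M, smul_mul] using hF s i j
  have hInit : Ghat 0 - 𝒢 = (z 0 * f₀) • (F 0 *ᵥ (Ghat 0 - 𝒢)) := by
    rw [hz0, hF0, smul_mulVec, one_mulVec, smul_smul, one_mul, mul_one_div_cancel hf₀.ne',
      one_smul]
  have hErrorEq : Ghat t - 𝒢 = (z t * f₀) • (F t *ᵥ (Ghat 0 - 𝒢)) :=
    Matrix.linearODE_solution_unique_of_mem_Icc_right hM.continuousOn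
      (HasDerivAt.continuousOn fun s _ => hError s) (fun s _ => (hError s).hasDerivWithinAt)
      (HasDerivAt.continuousOn fun s _ => hScaled s) (fun s _ => (hScaled s).hasDerivWithinAt)
      hInit ⟨ht, le_rfl⟩
  have hResidual : Ghat t - (z t * f₀) • (F t *ᵥ Ghat 0) = (1 - (z t * f₀) • F t) *ᵥ 𝒢 := by
    rw [sub_mulVec, one_mulVec, smul_mulVec, sub_eq_iff_eq_add.1 hErrorEq, mulVec_sub, smul_sub]
    abel
  rw [hResidual, mulVec_mulVec, adjugate_mul, smul_mulVec, one_mulVec]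

/-- DREM scalarization identity. For the least-squares estimator with
forgetting factor driven by `y(t) = ξ(t)ᵀ𝒢*` with `F(0) = (1/f₀)·Iₙ`, defining
`Δ(t) = det(Iₙ − z(t)f₀F(t))` and
`Y(t) = adj(Iₙ − z(t)f₀F(t))·(Ĝ(t) − z(t)f₀F(t)·Ĝ(0))`, one has `Y(t) = Δ(t)·𝒢*`
for all `t ≥ 0`. -/
theorem stmt_18
    (n : ℕ) (hn : 1 ≤ n)
    (𝒢 : Fin n → ℝ) (ξ : ℝ → Fin n → ℝ) (hξ : Continuous ξ)
    (y : ℝ → ℝ) (hy : ∀ t, y t = ξ t ⬝ᵥ 𝒢)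
    (γ f₀ : ℝ) (hγ : 0 < γ) (hf₀ : 0 < f₀)
    (χ : ℝ → ℝ) (hχ : Continuous χ)
    (Ghat : ℝ → Fin n → ℝ) (F : ℝ → Matrix (Fin n) (Fin n) ℝ) (z : ℝ → ℝ)
    (hGhat : ∀ t i, HasDerivAt (fun s => Ghat s i)
      (((γ * (y t - ξ t ⬝ᵥ Ghat t)) • (F t *ᵥ ξ t)) i) t)
    (hF : ∀ t i j, HasDerivAt (fun s => F s i j)
      (((-γ) • (F t * vecMulVec (ξ t) (ξ t) * F t) + χ t • F t) i j) t)
    (hF0 : F 0 = (1 / f₀) • (1 : Matrix (Fin n) (Fin n) ℝ))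
    (hz : ∀ t, HasDerivAt z (-(χ t) * z t) t) (hz0 : z 0 = 1) :
    ∀ t ≥ (0:ℝ),
      ((1 : Matrix (Fin n) (Fin n) ℝ) - (z t * f₀) • F t).adjugate
          *ᵥ (Ghat t - (z t * f₀) • (F t *ᵥ Ghat 0))
        = ((1 : Matrix (Fin n) (Fin n) ℝ) - (z t * f₀) • F t).det • 𝒢 :=
  stmt_18_general n 𝒢 ξ hξ y hy γ f₀ hf₀ χ Ghat F z hGhat hF hF0 hz hz0
end
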